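/- arXiv:1307.6812 — 4 statements merged into one kernel-verified Lean document; each statement's English description precedes it below -/
import Mathlib

section
/- Let b ∈ B have infinite order and let (f,b), (g,c) ∈ A ≀ B. Suppose z ∈ B satisfies bz = zc and for every t in a set of right-coset representatives of ⟨b⟩ in B, π_t^{(z)}(g) = π_t(f). Define h : B → A by h(b^k t) = (∏_{j ≤ k} f(b^j t)) · (∏_{j ≤ k} g(z^{-1}b^j t))^{-1} for each coset representative t and each k ∈ ℤ. Then h has finite support and (f,b)(h,z) = (h,z)(g,c) in A ≀ B; in particular (f,b) and (g,c) are conjugate. -/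
/-- Multiplication in the restricted wreath product `A ≀ B`:
`(f,b)(g,c) = (f · g^b, bc)` where `g^b (x) = g (b⁻¹ x)`. -/
def wmul {A B : Type*} [Group A] [Group B] (p q : (B → A) × B) : (B → A) × B :=
  (fun x => p.1 x * q.1 (p.2⁻¹ * x), p.2 * q.2)

/-- The ordered product `F(M) · F(M-1) · ⋯ · F(-M)` (larger indices on the left). -/
def orderedProd {A : Type*} [Group A] (F : ℤ → A) (M : ℕ) : A :=
  ((List.range (2 * M + 1)).map (fun i => F ((M : ℤ) - i))).prod

/-- The ordered product `F(0) · F(-1) · ⋯ · F(-M)` (larger indices on the left),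
a truncation of `∏_{j ≤ 0} F(j)`. -/
def lowerProd {A : Type*} [Group A] (F : ℤ → A) (M : ℕ) : A :=
  ((List.range (M + 1)).map (fun i => F (-(i : ℤ)))).prod

/-!
Write `P_f(x) = ∏_{j ≤ 0} f(bʲx)` and `P_g(x) = ∏_{j ≤ 0} g(z⁻¹bʲx)`, so that `h = P_f · P_g⁻¹`.
Peeling off the top factor gives `P_f(x) = f(x) · P_f(b⁻¹x)` and `P_g(x) = g(z⁻¹x) · P_g(b⁻¹x)`,
which telescopes to `f(x) · h(b⁻¹x) = h(x) · g(z⁻¹x)`: the first coordinate of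
`(f,b)(h,z) = (h,z)(g,c)`. As `b` has infinite order, each orbit `⟨b⟩s` meets the finite supports
of `f` and `g(z⁻¹ ·)` in a bounded window `{bʲs : |j| ≤ N}`. Below the window both partial products
are empty; above it they are the full products `π_s(f)` and `π_s^{(z)}(g)`, which agree. Hence `h`
is trivial outside finitely many windows.
-/

open Function

section DescProd

variable {A : Type*} [Group A]

def descProd (F : ℤ → A) (top : ℤ) (n : ℕ) : A :=
  ((List.range n).map fun i : ℕ => F (top - i)).prod

theorem descProd_one (F : ℤ → A) (top : ℤ) : descProd F top 1 = F top := by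
  simp [descProd]

theorem descProd_add (F : ℤ → A) (top : ℤ) (m n : ℕ) :
    descProd F top (m + n) = descProd F top m * descProd F (top - m) n := by
  simp only [descProd, List.range_add, List.map_append, List.prod_append, List.map_map]
  congr 3
  funext i
  simp only [comp_apply, Nat.cast_add, sub_add_eq_sub_sub]

theorem descProd_eq_one {F : ℤ → A} {top : ℤ} {n : ℕ} (hF : ∀ i : ℕ, i < n → F (top - i) = 1) :
    descProd F top n = 1 :=
  List.prod_eq_one (by simpa using hF)

theorem lowerProd_comp_add (F : ℤ → A) (k : ℤ) (M : ℕ) :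
    lowerProd (fun j => F (j + k)) M = descProd F k (M + 1) := by
  simp [lowerProd, descProd, ← List.map_eq_flatMap, comp_def, neg_add_eq_sub]

theorem orderedProd_eq_descProd (F : ℤ → A) (M : ℕ) :
    orderedProd F M = descProd F M (2 * M + 1) := by
  simp [orderedProd, descProd, ← List.map_eq_flatMap, comp_def]

theorem descProd_eq_orderedProd {F : ℤ → A} {N n : ℕ} (hF : ∀ m : ℤ, N < |m| → F m = 1)
    (hn : N < n) : descProd F n (n + N + 1) = orderedProd F (n + N) := by
  have above : descProd F ↑(n + N) N = 1 :=
    descProd_eq_one fun i hi => hF _ (lt_abs.2 (Or.inl (by omega)))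
  have below : descProd F (↑(n + N) - ↑(N + (n + N + 1))) n = 1 :=
    descProd_eq_one fun i hi => hF _ (lt_abs.2 (Or.inr (by omega)))
  -- `[-(n+N), n+N]` splits into the top `N` indices, the window `[-N, n]` and the bottom `n`.
  rw [orderedProd_eq_descProd, show 2 * (n + N) + 1 = N + (n + N + 1) + n by ring,
    descProd_add F _ (N + (n + N + 1)) n, descProd_add F _ N, above, below, one_mul, mul_one]
  congr 1
  push_cast
  ring

end DescProd

theorem exists_forall_lt_abs_zpow_mul_notMem {B : Type*} [Group B] {b : B}
    (hb : Injective fun k : ℤ => b ^ k) {S : Set B} (hS : S.Finite) (s : B) :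
    ∃ N : ℕ, ∀ j : ℤ, N < |j| → b ^ j * s ∉ S := by
  have hfin : ((fun j : ℤ => b ^ j * s) ⁻¹' S).Finite :=
    hS.preimage ((mul_left_injective s).comp hb).injOn
  obtain ⟨N, hN⟩ := (hfin.image Int.natAbs).bddAbove
  refine ⟨N, fun j hj hjS => ?_⟩
  have : j.natAbs ≤ N := hN ⟨j, hjS, rfl⟩
  rw [Int.abs_eq_natAbs] at hj
  omega

section LowerProdQuotient

variable {A B : Type*} [Group A] [Group B] {f g h : B → A} {b z : B}

def IsLowerProdQuotient (f g h : B → A) (b z : B) : Prop :=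
  ∀ x : B, ∀ M : ℕ, (∀ j : ℤ, (M : ℤ) < j →
      f (b ^ (-j) * x) = 1 ∧ g (z⁻¹ * b ^ (-j) * x) = 1) →
    h x = lowerProd (fun j => f (b ^ j * x)) M
      * (lowerProd (fun j => g (z⁻¹ * b ^ j * x)) M)⁻¹

namespace IsLowerProdQuotient

theorem apply_zpow_mul (hdef : IsLowerProdQuotient f g h b z) {s : B} {k : ℤ} {M : ℕ}
    (hM : ∀ j : ℤ, j < k - M → f (b ^ j * s) = 1 ∧ g (z⁻¹ * b ^ j * s) = 1) :
    h (b ^ k * s) = descProd (fun j => f (b ^ j * s)) k (M + 1)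
      * (descProd (fun j => g (z⁻¹ * b ^ j * s)) k (M + 1))⁻¹ := by
  have shift : ∀ j : ℤ, b ^ j * (b ^ k * s) = b ^ (j + k) * s := fun j => by
    rw [← mul_assoc, ← zpow_add]
  have shift' : ∀ j : ℤ, z⁻¹ * b ^ j * (b ^ k * s) = z⁻¹ * b ^ (j + k) * s := fun j => by
    rw [mul_assoc, shift, ← mul_assoc]
  rw [hdef _ M fun j hj => by rw [shift, shift']; exact hM _ (by omega)]
  simp only [shift, shift']
  rw [← lowerProd_comp_add, ← lowerProd_comp_add]

theorem apply_zpow_mul_eq_one_of_forall_le (hdef : IsLowerProdQuotient f g h b z) {s : B}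
    {k : ℤ} (hk : ∀ j ≤ k, f (b ^ j * s) = 1 ∧ g (z⁻¹ * b ^ j * s) = 1) :
    h (b ^ k * s) = 1 := by
  rw [hdef.apply_zpow_mul (M := 0) fun j hj => hk j (by omega),
    descProd_eq_one fun i _ => (hk _ (by omega)).1,
    descProd_eq_one fun i _ => (hk _ (by omega)).2, inv_one, mul_one]

theorem apply_zpow_mul_eq_one (hdef : IsLowerProdQuotient f g h b z) {s : B}
    (hpi : ∀ M : ℕ, (∀ j : ℤ, (M : ℤ) < |j| → f (b ^ j * s) = 1 ∧ g (z⁻¹ * b ^ j * s) = 1) →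
      orderedProd (fun j => f (b ^ j * s)) M = orderedProd (fun j => g (z⁻¹ * b ^ j * s)) M)
    {N : ℕ} (hN : ∀ j : ℤ, (N : ℤ) < |j| → f (b ^ j * s) = 1 ∧ g (z⁻¹ * b ^ j * s) = 1)
    {k : ℤ} (hk : N < |k|) : h (b ^ k * s) = 1 := by
  rcases lt_abs.1 hk with hk | hk
  · lift k to ℕ using by omega
    rw [hdef.apply_zpow_mul (M := k + N) fun j hj => hN j (lt_abs.2 (Or.inr (by omega))),
      descProd_eq_orderedProd (fun m hm => (hN m hm).1) (by omega),
      descProd_eq_orderedProd (fun m hm => (hN m hm).2) (by omega),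
      hpi _ fun j hj => hN j (by omega), mul_inv_cancel]
  · exact hdef.apply_zpow_mul_eq_one_of_forall_le fun j hj =>
      hN j (lt_abs.2 (Or.inr (by omega)))

theorem mul_apply_inv_mul (hdef : IsLowerProdQuotient f g h b z) {x : B} {N : ℕ}
    (hN : ∀ j : ℤ, (N : ℤ) < |j| → f (b ^ j * x) = 1 ∧ g (z⁻¹ * b ^ j * x) = 1) :
    f x * h (b⁻¹ * x) = h x * g (z⁻¹ * x) := by
  have hx := hdef.apply_zpow_mul (s := x) (k := 0) (M := N + 1) fun j hj =>
    hN j (lt_abs.2 (Or.inr (by omega)))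
  have hx' := hdef.apply_zpow_mul (s := x) (k := -1) (M := N) fun j hj =>
    hN j (lt_abs.2 (Or.inr (by omega)))
  rw [show N + 1 + 1 = 1 + (N + 1) by ring, descProd_add _ _ 1, descProd_add _ _ 1,
    descProd_one, descProd_one] at hx
  simp only [zpow_zero, one_mul, mul_one, zpow_neg_one, Nat.cast_one, zero_sub] at hx hx'
  rw [hx, hx']
  group

theorem mulSupport_finite (hdef : IsLowerProdQuotient f g h b z)
    (hpi : ∀ t : B, ∀ M : ℕ, (∀ j : ℤ, (M : ℤ) < |j| →
        f (b ^ j * t) = 1 ∧ g (z⁻¹ * b ^ j * t) = 1) →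
      orderedProd (fun j => f (b ^ j * t)) M = orderedProd (fun j => g (z⁻¹ * b ^ j * t)) M)
    {S : Set B} (hS : S.Finite) (hSc : ∀ y ∉ S, f y = 1 ∧ g (z⁻¹ * y) = 1)
    (hbound : ∀ s : B, ∃ N : ℕ, ∀ j : ℤ, (N : ℤ) < |j| →
      f (b ^ j * s) = 1 ∧ g (z⁻¹ * b ^ j * s) = 1) :
    (mulSupport h).Finite := by
  choose N hN using hbound
  refine (hS.biUnion fun s _ => (Set.finite_Icc (-(N s) : ℤ) (N s)).image
    fun k => b ^ k * s).subset fun x hx => ?_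
  obtain ⟨j, hj⟩ : ∃ j : ℤ, b ^ j * x ∈ S := by
    by_contra! hxS
    have := hdef.apply_zpow_mul_eq_one_of_forall_le (s := x) (k := 0) fun j _ => by
      simpa [mul_assoc] using hSc _ (hxS j)
    exact hx (by simpa using this)
  refine Set.mem_biUnion hj ⟨-j, ?_, by group⟩
  rw [Set.mem_Icc, ← abs_le]
  by_contra! hlt
  refine hx ?_
  simpa [← mul_assoc, ← zpow_add] using hdef.apply_zpow_mul_eq_one (hpi _) (hN _) hlt

end IsLowerProdQuotient

end LowerProdQuotient

/-- Let `b ∈ B` have infinite order and `(f,b), (g,c) ∈ A ≀ B`.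
Suppose `z ∈ B` satisfies `bz = zc` and `π_t^{(z)}(g) = π_t(f)` for every `t`.
If `h : B → A` is given by `h(bᵏt) = (∏_{j ≤ k} f(bʲt)) · (∏_{j ≤ k} g(z⁻¹bʲt))⁻¹`
(equivalently `h(x) = (∏_{j ≤ 0} f(bʲx)) · (∏_{j ≤ 0} g(z⁻¹bʲx))⁻¹` for all `x`,
the products being stable truncations), then `h` has finite support and
`(f,b)(h,z) = (h,z)(g,c)`; in particular `(f,b)` and `(g,c)` are conjugate. -/
theorem wreath_conj_construction {A B : Type*} [Group A] [Group B]
    (f g h : B → A) (b c z : B)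
    (hf : (Function.mulSupport f).Finite)
    (hg : (Function.mulSupport g).Finite)
    (hb : ∀ k : ℤ, b ^ k = 1 → k = 0)
    (hzc : b * z = z * c)
    (hpi : ∀ t : B, ∀ M : ℕ, (∀ j : ℤ, (M : ℤ) < |j| →
        f (b ^ j * t) = 1 ∧ g (z⁻¹ * b ^ j * t) = 1) →
      orderedProd (fun j => f (b ^ j * t)) M
        = orderedProd (fun j => g (z⁻¹ * b ^ j * t)) M)
    (hdef : ∀ x : B, ∀ M : ℕ, (∀ j : ℤ, (M : ℤ) < j →
        f (b ^ (-j) * x) = 1 ∧ g (z⁻¹ * b ^ (-j) * x) = 1) →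
      h x = lowerProd (fun j => f (b ^ j * x)) M
        * (lowerProd (fun j => g (z⁻¹ * b ^ j * x)) M)⁻¹) :
    (Function.mulSupport h).Finite ∧ wmul (f, b) (h, z) = wmul (h, z) (g, c) := by
  have hquot : IsLowerProdQuotient f g h b z := hdef
  have hbinj : Injective fun k : ℤ => b ^ k :=
    injective_zpow_iff_not_isOfFinOrder.2 fun hfin =>
      let ⟨k, hk0, hk⟩ := isOfFinOrder_iff_zpow_eq_one.1 hfin
      hk0 (hb k hk)
  set S := mulSupport f ∪ (z⁻¹ * ·) ⁻¹' mulSupport g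
  have hS : S.Finite := hf.union (hg.preimage (mul_right_injective z⁻¹).injOn)
  have hSc : ∀ y ∉ S, f y = 1 ∧ g (z⁻¹ * y) = 1 := by simp [S]
  have hbound : ∀ s : B, ∃ N : ℕ, ∀ j : ℤ, (N : ℤ) < |j| →
      f (b ^ j * s) = 1 ∧ g (z⁻¹ * b ^ j * s) = 1 := fun s =>
    (exists_forall_lt_abs_zpow_mul_notMem hbinj hS s).imp fun N hN j hj => by
      simpa [mul_assoc] using hSc _ (hN j hj)
  refine ⟨hquot.mulSupport_finite hpi hS hSc hbound, ?_⟩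
  simp only [wmul, Prod.mk.injEq, hzc, and_true]
  funext x
  obtain ⟨N, hN⟩ := hbound x
  exact hquot.mul_apply_inv_mul hN
end

section
/- Let b ∈ B have finite order N, and suppose (f,b) is conjugate to (g,c) in A ≀ B. Then there exists z ∈ B with bz = zc such that for every t ∈ B, the element π_t(f) = f(b^{N-1}t)·f(b^{N-2}t)···f(t) is conjugate in A to π_t^{(z)}(g) = g(z^{-1}b^{N-1}t)···g(z^{-1}t). -/
/-- For `b` of order `N`, the ordered product
`π_t(f) = f(b^{N-1}t) · f(b^{N-2}t) · ⋯ · f(t)`. -/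
def piProd {A B : Type*} [Group A] [Group B] (b : B) (N : ℕ) (f : B → A) (t : B) : A :=
  ((List.range N).map (fun i => f (b ^ (N - 1 - i) * t))).prod

lemma piProd_succ {A B : Type*} [Group A] [Group B] (b : B) (n : ℕ) (f : B → A) (t : B) :
    piProd b (n + 1) f t = piProd b n f (b * t) * f t := by
  unfold piProd
  rw [List.range_succ, List.map_append, List.prod_append]
  simp only [List.map_cons, List.map_nil, List.prod_cons, List.prod_nil, mul_one]
  congr 1
  · congr 1
    apply List.map_congr_left
    intro i hi
    rw [List.mem_range] at hi
    have : n + 1 - 1 - i = (n - 1 - i) + 1 := by omega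
    rw [this, pow_succ, mul_assoc]
  · norm_num

lemma piProd_key {A B : Type*} [Group A] [Group B] (f g h : B → A) (b z : B)
    (key : ∀ x, f x = h x * g (z⁻¹ * x) * (h (b⁻¹ * x))⁻¹) :
    ∀ n t, piProd b n f t =
      h (b ^ n * b⁻¹ * t) * piProd b n (fun x => g (z⁻¹ * x)) t * (h (b⁻¹ * t))⁻¹ := by
  intro n
  induction n with
  | zero => intro t; simp [piProd]
  | succ n ih =>
    intro t
    rw [piProd_succ, piProd_succ, ih (b * t), key t]
    have h1 : b⁻¹ * (b * t) = t := by group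
    have h2 : b ^ n * b⁻¹ * (b * t) = b ^ (n + 1) * b⁻¹ * t := by
      rw [pow_succ]; group
    rw [h1, h2]
    group

/-- Let `b ∈ B` have finite order `N` and suppose `(f,b)` is
conjugate to `(g,c)` in `A ≀ B`. Then there exists `z ∈ B` with `bz = zc` such
that for every `t ∈ B`, `π_t(f)` is conjugate in `A` to
`π_t^{(z)}(g) = g(z⁻¹b^{N-1}t) ⋯ g(z⁻¹t)`. -/
theorem wreath_conj_finite_order {A B : Type*} [Group A] [Group B]
    (f g : B → A) (b c : B) (N : ℕ)
    (hf : (Function.mulSupport f).Finite)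
    (hg : (Function.mulSupport g).Finite)
    (hN : orderOf b = N) (hNpos : 0 < N)
    (hconj : ∃ (h : B → A) (z : B), (Function.mulSupport h).Finite ∧
      wmul (f, b) (h, z) = wmul (h, z) (g, c)) :
    ∃ z : B, b * z = z * c ∧
      ∀ t : B, IsConj (piProd b N f t) (piProd b N (fun x => g (z⁻¹ * x)) t) := by
  obtain ⟨h, z, -, heq⟩ := hconj
  have h2 : b * z = z * c := congrArg Prod.snd heq
  have h1 : ∀ x, f x * h (b⁻¹ * x) = h x * g (z⁻¹ * x) := by
    intro x
    exact congrFun (congrArg Prod.fst heq) x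
  refine ⟨z, h2, fun t => ?_⟩
  have key : ∀ x, f x = h x * g (z⁻¹ * x) * (h (b⁻¹ * x))⁻¹ := by
    intro x
    rw [← h1 x]; group
  have hbN : b ^ N = 1 := by rw [← hN]; exact pow_orderOf_eq_one b
  have := piProd_key f g h b z key N t
  rw [hbN, one_mul] at this
  rw [this]
  rw [isConj_comm, isConj_iff]
  exact ⟨h (b⁻¹ * t), rfl⟩
end

section
/- Let (f,b) be an element of ℤ^r ≀ G corresponding to a path: there is a word w in the free group on x₁,…,x_r such that f(g)ᵢ equals the net number of signed crossings of the edge (g, gxᵢ) by the path traced by w in the Cayley graph of G, and b is the endpoint of that path. Define Σ_f(g) = Σᵢ fᵢ(g) − Σᵢ fᵢ(gxᵢ^{-1}). Then Σ_f(e) = 1, Σ_f(b) = −1, and Σ_f(g) = 0 for all g ∉ {e, b}, in the case e ≠ b. (Flow/divergence condition for paths.) -/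
/-- The restricted wreath product `ℤ^r ≀ G`. -/
abbrev WreathZ (r : ℕ) (G : Type*) [Group G] := (G →₀ (Fin r → ℤ)) × G

noncomputable instance WreathZ.instGroup (r : ℕ) (G : Type*) [Group G] :
    Group (WreathZ r G) where
  mul p q := (p.1 + Finsupp.mapDomain (fun x => p.2 * x) q.1, p.2 * q.2)
  one := (0, 1)
  inv p := (- Finsupp.mapDomain (fun x => p.2⁻¹ * x) p.1, p.2⁻¹)
  mul_assoc p q s := by
    refine Prod.ext ?_ (mul_assoc _ _ _)
    show (p.1 + Finsupp.mapDomain (fun x => p.2 * x) q.1)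
        + Finsupp.mapDomain (fun x => p.2 * q.2 * x) s.1
      = p.1 + Finsupp.mapDomain (fun x => p.2 * x)
          (q.1 + Finsupp.mapDomain (fun x => q.2 * x) s.1)
    rw [Finsupp.mapDomain_add, add_assoc]
    congr 1
    have : (fun x => p.2 * q.2 * x) = (fun x => p.2 * x) ∘ (fun x => q.2 * x) := by
      funext x; simp [mul_assoc]
    rw [this, Finsupp.mapDomain_comp]
  one_mul p := by
    refine Prod.ext ?_ (one_mul _)
    show (0 : G →₀ (Fin r → ℤ)) + Finsupp.mapDomain (fun x => (1:G) * x) p.1 = p.1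
    have : (fun x : G => (1:G) * x) = id := by funext x; simp
    rw [this, Finsupp.mapDomain_id, zero_add]
  mul_one p := by
    refine Prod.ext ?_ (mul_one _)
    show p.1 + Finsupp.mapDomain (fun x => p.2 * x) 0 = p.1
    simp
  inv_mul_cancel p := by
    refine Prod.ext ?_ (inv_mul_cancel _)
    show (- Finsupp.mapDomain (fun x => p.2⁻¹ * x) p.1)
        + Finsupp.mapDomain (fun x => p.2⁻¹ * x) p.1 = 0
    simp

/-- The homomorphism `F → ℤ^r ≀ G` recording, for a word `w`, the signed net
crossings of each edge `(g, g·xᵢ)` of the Cayley graph of `G` by the path that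
`w` traces out, together with the path's endpoint. The generator `xᵢ` maps to
the function supported at `e` with value the `i`-th basis vector, paired with
`xᵢ`'s image in `G`. -/
noncomputable def flowHom {G : Type*} [Group G] (r : ℕ) (x : Fin r → G) :
    FreeGroup (Fin r) →* WreathZ r G :=
  FreeGroup.lift (fun i => ((Finsupp.single (1 : G) (Pi.single i (1 : ℤ))), x i))

/-!
The divergence `Σ_f` is additive in `f`, commutes with left translation by `G`, and the single
edge `(e, xᵢ)` has divergence `δ_e - δ_{xᵢ}`. Hence the pairs `(f, b)` with `Σ_f = δ_e - δ_b` form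
a subgroup of `ℤ^r ≀ G` containing the images of the generators, so it contains the whole image
of `flowHom`.
-/

namespace FlowDivergence

open Finset

variable {G ι : Type*} [Group G]

lemma mapDomain_mul_left_apply {M : Type*} [AddCommMonoid M] (a : G) (f : G →₀ M) (g : G) :
    Finsupp.mapDomain (a * ·) f g = f (a⁻¹ * g) := by
  conv_lhs => rw [← mul_inv_cancel_left a g]
  exact Finsupp.mapDomain_apply (mul_right_injective a) f _

lemma single_apply_inv_mul {M : Type*} [Zero M] (a c g : G) (m : M) :
    Finsupp.single c m (a⁻¹ * g) = Finsupp.single (a * c) m g := by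
  classical
  simp only [Finsupp.single_apply, eq_inv_mul_iff_mul_eq]

variable [Fintype ι]

/-- The paper's `Σ_f`. -/
def divergence (x : ι → G) : (G →₀ (ι → ℤ)) →+ (G → ℤ) where
  toFun f g := ∑ i, f g i - ∑ i, f (g * (x i)⁻¹) i
  map_zero' := by ext; simp
  map_add' f₁ f₂ := by ext; simp only [Finsupp.add_apply, Pi.add_apply, sum_add_distrib]; ring

lemma divergence_apply (x : ι → G) (f : G →₀ (ι → ℤ)) (g : G) :
    divergence x f g = ∑ i, f g i - ∑ i, f (g * (x i)⁻¹) i := rfl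

lemma divergence_mapDomain_mul_left (x : ι → G) (a : G) (f : G →₀ (ι → ℤ)) (g : G) :
    divergence x (Finsupp.mapDomain (a * ·) f) g = divergence x f (a⁻¹ * g) := by
  simp only [divergence_apply, mapDomain_mul_left_apply, mul_assoc]

lemma divergence_single_one [DecidableEq ι] (x : ι → G) (i : ι) (g : G) :
    divergence x (Finsupp.single 1 (Pi.single i 1)) g
      = (Finsupp.single 1 1 - Finsupp.single (x i) 1 : G →₀ ℤ) g := by
  classical
  simp only [divergence_apply, Finsupp.single_apply, eq_mul_inv_iff_mul_eq, one_mul,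
    Finsupp.coe_sub, Pi.sub_apply]
  congr 1
  · split_ifs <;> simp
  · rw [sum_eq_single i (fun j _ hj => by split_ifs <;> simp [hj]) (by simp)]
    split_ifs <;> simp

variable {r : ℕ}

/-- A subgroup because concatenating a path from `e` to `a` with the translate by `a` of a path
from `e` to `c` gives a path from `e` to `a c`, and the boundaries telescope. -/
def pathFlowSubgroup (x : Fin r → G) : Subgroup (WreathZ r G) where
  carrier := {p | divergence x p.1 = ⇑(Finsupp.single 1 1 - Finsupp.single p.2 1 : G →₀ ℤ)}
  -- `change` exposes the wreath product operations: a bare `p * q` on the product type would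
  -- elaborate to `Prod.instMul` instead.
  one_mem' := by
    change divergence x 0 = ⇑(Finsupp.single 1 1 - Finsupp.single 1 1 : G →₀ ℤ)
    simp
  mul_mem' {p q} hp hq := by
    change divergence x (p.1 + Finsupp.mapDomain (p.2 * ·) q.1)
      = ⇑(Finsupp.single 1 1 - Finsupp.single (p.2 * q.2) 1 : G →₀ ℤ)
    funext g
    rw [map_add, Pi.add_apply, divergence_mapDomain_mul_left, hp, hq]
    simp only [Finsupp.coe_sub, Pi.sub_apply, single_apply_inv_mul, mul_one]
    exact sub_add_sub_cancel _ _ _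
  inv_mem' {p} hp := by
    change divergence x (-Finsupp.mapDomain (p.2⁻¹ * ·) p.1)
      = ⇑(Finsupp.single 1 1 - Finsupp.single p.2⁻¹ 1 : G →₀ ℤ)
    funext g
    rw [map_neg, Pi.neg_apply, divergence_mapDomain_mul_left, hp]
    simp only [Finsupp.coe_sub, Pi.sub_apply, single_apply_inv_mul]
    simp only [mul_one, inv_mul_cancel, neg_sub]

lemma divergence_flowHom_fst (x : Fin r → G) (w : FreeGroup (Fin r)) :
    divergence x (flowHom r x w).1
      = ⇑(Finsupp.single 1 1 - Finsupp.single (flowHom r x w).2 1 : G →₀ ℤ) := by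
  refine FreeGroup.range_lift_le (s := pathFlowSubgroup x) ?_ ⟨w, rfl⟩
  rintro _ ⟨i, rfl⟩
  funext g
  exact divergence_single_one x i g

end FlowDivergence

open FlowDivergence in
/-- **flow/divergence condition for paths.** Let `(f, b)` be the
element of `ℤ^r ≀ G` corresponding to the path traced in the Cayley graph of
`G` by a word `w`, and let `Σ_f(g) = Σᵢ fᵢ(g) − Σᵢ fᵢ(g xᵢ⁻¹)` be the net
number of departures of the path from the vertex `g`. If `b ≠ e`, then
`Σ_f(e) = 1`, `Σ_f(b) = −1`, and `Σ_f(g) = 0` for all `g ∉ {e, b}`. -/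
theorem flow_divergence {G : Type*} [Group G] (r : ℕ) (x : Fin r → G)
    (w : FreeGroup (Fin r))
    (f : G →₀ (Fin r → ℤ)) (b : G)
    (hfb : flowHom r x w = (f, b)) (hb : b ≠ 1) :
    (∑ i : Fin r, f 1 i - ∑ i : Fin r, f ((x i)⁻¹) i) = 1 ∧
    (∑ i : Fin r, f b i - ∑ i : Fin r, f (b * (x i)⁻¹) i) = -1 ∧
    (∀ g : G, g ≠ 1 → g ≠ b →
      (∑ i : Fin r, f g i - ∑ i : Fin r, f (g * (x i)⁻¹) i) = 0) := by
  have hdiv : ∀ g, divergence x f g = Finsupp.single 1 1 g - Finsupp.single b 1 g := by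
    have h := divergence_flowHom_fst x w
    rw [hfb] at h
    exact congrFun h
  refine ⟨?_, ?_, fun g hg1 hgb => ?_⟩
  · simpa [divergence_apply, Finsupp.single_apply, hb] using hdiv 1
  · simpa [divergence_apply, Finsupp.single_apply, hb] using hdiv b
  · simpa [divergence_apply, Finsupp.single_apply, hg1, hgb, eq_comm] using hdiv g
end

section
/- Let Γ = A ≀ B with A, B finitely generated. For elements u_n = (1, b_n), v_n = (1, c_n) with b_n conjugate to c_n in B, every conjugator of u_n and v_n in Γ has the form (h, x) where x conjugates b_n to c_n in B and h satisfies h(g) = h(b_n^{-1}g) for all g ∈ B; moreover if b_n has infinite order then h must be the trivial function, so every conjugator is (1, x) with b_n x = x c_n. -/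
/-!
Comparing the two components of `(1, b)(h, x) = (h, x)(1, c)` gives `b x = x c` and
`h(b⁻¹ g) = h(g)`. Thus `h` is constant on every orbit `{bⁿ g}`; when `b` has infinite order
these orbits are infinite, so a finitely supported `h` vanishes on all of them.
-/

section Invariant

variable {M B : Type*} [Group B] {h : B → M} {b : B}

theorem apply_pow_mul_of_mul_left_invariant (hinv : ∀ g, h (b * g) = h g) (n : ℕ) (g : B) :
    h (b ^ n * g) = h g := by
  induction n with
  | zero => rw [pow_zero, one_mul]
  | succ n ih => rw [pow_succ', mul_assoc, hinv, ih]

theorem eq_one_of_mul_left_invariant [One M] (hb : ¬IsOfFinOrder b)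
    (hh : (Function.mulSupport h).Finite) (hinv : ∀ g, h (b * g) = h g) : h = 1 := by
  funext g
  by_contra hg
  have horbit : Function.Injective fun n : ℕ => b ^ n * g :=
    (mul_left_injective g).comp (injective_pow_iff_not_isOfFinOrder.mpr hb)
  refine (Set.infinite_range_of_injective horbit).mono ?_ hh
  rintro _ ⟨n, rfl⟩
  rwa [Function.mem_mulSupport, apply_pow_mul_of_mul_left_invariant hinv]

end Invariant

section Wreath

variable {A B : Type*} [Group A] [Group B]

theorem wmul_one_left (b : B) (p : (B → A) × B) :
    wmul (fun _ => 1, b) p = (fun g => p.1 (b⁻¹ * g), b * p.2) := by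
  simp only [wmul, one_mul]

theorem wmul_one_right (p : (B → A) × B) (c : B) :
    wmul p (fun _ => 1, c) = (p.1, p.2 * c) := by
  simp only [wmul, mul_one]

theorem wmul_conj_one_iff (b c x : B) (h : B → A) :
    wmul (fun _ => 1, b) (h, x) = wmul (h, x) (fun _ => 1, c) ↔
      (∀ g, h (b⁻¹ * g) = h g) ∧ b * x = x * c := by
  rw [wmul_one_left, wmul_one_right, Prod.mk.injEq, funext_iff]

end Wreath

/-- In `Γ = A ≀ B`, every conjugator `(h, x)` of
`u = (1, bₙ)` and `v = (1, cₙ)` satisfies `bₙ x = x cₙ` and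
`h(g) = h(bₙ⁻¹ g)` for all `g`; moreover if `bₙ` has infinite order then `h`
must be the trivial function, so every conjugator has the form `(1, x)` with
`bₙ x = x cₙ`. -/
theorem wreath_trivial_conjugators {A B : Type*} [Group A] [Group B]
    (b c : B) (h : B → A) (x : B)
    (hh : (Function.mulSupport h).Finite)
    (hconj : wmul ((fun _ => (1 : A)), b) (h, x) = wmul (h, x) ((fun _ => 1), c)) :
    b * x = x * c ∧
    (∀ g : B, h g = h (b⁻¹ * g)) ∧
    ((∀ k : ℤ, b ^ k = 1 → k = 0) → ∀ g : B, h g = 1) := by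
  obtain ⟨hinv, hbx⟩ := (wmul_conj_one_iff b c x h).mp hconj
  refine ⟨hbx, fun g => (hinv g).symm, fun hb g => ?_⟩
  have hb' : ¬IsOfFinOrder b := by
    rw [isOfFinOrder_iff_zpow_eq_one]
    rintro ⟨k, hk, hbk⟩
    exact hk (hb k hbk)
  have hinv' : ∀ g, h (b * g) = h g := fun g => by
    simpa only [inv_mul_cancel_left] using (hinv (b * g)).symm
  exact congrFun (eq_one_of_mul_left_invariant hb' hh hinv') g
end
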